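/- arXiv:1710.03617 — 3 statements merged into one kernel-verified Lean document; each statement's English description precedes it below -/
import Mathlib

section
/- Let β : ℝ → ℝ be continuous with compact support, and let β̂ be its Fourier transform. Then there exists a finite constant B such that Σ_{k∈ℤ} |β̂(ω − 2kπ)|² ≤ B² for all ω ∈ ℝ. In fact one may take B² = Σ_{n∈ℤ} |(β ⋆ β^∨)(n)|, where β^∨(t) = β(−t) and ⋆ denotes convolution. -/
/-!
Put `ξ₀ = ω / 2π`, so that `β̂ (ω - 2kπ) = 𝓕 β (ξ₀ - k)` for Mathlib's normalisation
`𝓕 f ξ = ∫ e^{-2πitξ} f t dt`. The autocorrelation `γ = β^∨ ⋆ β` has Fourier transform `|𝓕 β|²`,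
so Poisson summation for the compactly supported `t ↦ e^{-2πiξ₀t} γ t` gives
`∑ₖ |𝓕 β (k + ξ₀)|² = ∑ₙ e^{-2πiξ₀n} γ n`, whose modulus is at most `∑ₙ |γ n|`.
Poisson summation needs the left-hand series to converge; this is Parseval's identity for the
`1`-periodisation of `t ↦ e^{-2πiξ₀t} β t`, whose Fourier coefficients are the `𝓕 β (k + ξ₀)`.
-/

open scoped Real FourierTransform Convolution ComplexConjugate
open Complex MeasureTheory

lemma IsCompact.finite_setOf_intCast_mem {C : Set ℝ} (hC : IsCompact C) :
    {n : ℤ | (n : ℝ) ∈ C}.Finite := by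
  simpa using Filter.eventually_cofinite.1
    (Int.tendsto_coe_cofinite.eventually hC.compl_mem_cocompact)

section CompactSupport

variable {E : Type*} [NormedAddCommGroup E]

lemma HasCompactSupport.summable_norm_comp_intCast {f : ℝ → E} (hf : HasCompactSupport f) :
    Summable fun n : ℤ => ‖f n‖ :=
  summable_of_hasFiniteSupport <| hf.isCompact.finite_setOf_intCast_mem.subset fun _ hn =>
    subset_tsupport _ (norm_ne_zero_iff.mp hn)

lemma HasCompactSupport.summable_norm_restrict_comp_addRight {f : C(ℝ, E)}
    (hf : HasCompactSupport f) (K : TopologicalSpace.Compacts ℝ) :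
    Summable fun n : ℤ => ‖(f.comp (ContinuousMap.addRight n)).restrict K‖ := by
  refine summable_of_hasFiniteSupport <|
    (hf.isCompact.add K.isCompact.neg).finite_setOf_intCast_mem.subset fun n hn => ?_
  obtain ⟨x, hx⟩ : ∃ x : K, f (x + n) ≠ 0 := by
    by_contra! h
    have : (f.comp (ContinuousMap.addRight n)).restrict K = 0 := by ext x; exact h x
    exact hn (by simp [this])
  exact Set.mem_add.2 ⟨x + n, subset_tsupport _ hx, -x, by simp, by simp⟩

end CompactSupport

theorem Real.tsum_eq_tsum_fourier_of_hasCompactSupport {f : ℝ → ℂ} (hc : Continuous f)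
    (hs : HasCompactSupport f) (h_sum : Summable fun n : ℤ => 𝓕 f n) :
    ∑' n : ℤ, f n = ∑' n : ℤ, 𝓕 f n := by
  simpa [fourier_eval_zero] using Real.tsum_eq_tsum_fourier (f := ⟨f, hc⟩)
    (hs.summable_norm_restrict_comp_addRight (f := ⟨f, hc⟩)) h_sum 0

theorem Real.summable_sq_norm_fourier_intCast {f : ℝ → ℂ} (hc : Continuous f)
    (hs : HasCompactSupport f) : Summable fun n : ℤ => ‖𝓕 f n‖ ^ 2 := by
  let F : C(ℝ, ℂ) := ⟨f, hc⟩
  let P : C(UnitAddCircle, ℂ) := ⟨(F.periodic_tsum_comp_add_zsmul 1).lift,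
    continuous_coinduced_dom.mpr (map_continuous _)⟩
  have hP := (hasSum_sq_fourierCoeff (ContinuousMap.toLp 2 AddCircle.haarAddCircle ℂ P)).summable
  simp_rw [fourierCoeff_toLp] at hP
  convert hP using 4 with n
  exact (Real.fourierCoeff_tsum_comp_add (hs.summable_norm_restrict_comp_addRight (f := F)) n).symm

lemma Real.fourier_exp_mul (f : ℝ → ℂ) (ξ₀ ξ : ℝ) :
    𝓕 (fun t => cexp ((-2 * π * ξ₀ * t : ℝ) * I) * f t) ξ = 𝓕 f (ξ + ξ₀) := by
  simp_rw [Real.fourier_real_eq_integral_exp_smul, smul_eq_mul, ← mul_assoc, ← Complex.exp_add]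
  congr! 4
  push_cast
  ring

lemma Real.fourier_conj_comp_neg (f : ℝ → ℂ) (ξ : ℝ) :
    𝓕 (fun t => conj (f (-t))) ξ = conj (𝓕 f ξ) := by
  simp_rw [Real.fourier_real_eq_integral_exp_smul, smul_eq_mul, ← integral_conj, map_mul,
    ← Complex.exp_conj, map_mul, conj_ofReal, conj_I]
  rw [← integral_neg_eq_self]
  congr! 3 with t
  · congr 1
    push_cast
    ring
  · rw [neg_neg]

/-- For real `β` this is the `β ⋆ β^∨` of the statement. -/
noncomputable def autocorrelation (f : ℝ → ℂ) : ℝ → ℂ :=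
  (fun t => conj (f (-t))) ⋆[ContinuousLinearMap.mul ℂ ℂ] f

section Autocorrelation

variable {f : ℝ → ℂ}

lemma Real.fourier_autocorrelation (hf : Integrable f) (ξ : ℝ) :
    𝓕 (autocorrelation f) ξ = (‖𝓕 f ξ‖ ^ 2 : ℝ) := by
  have hf_refl : Integrable fun t => conj (f (-t)) :=
    conjLIE.toContinuousLinearEquiv.toContinuousLinearMap.integrable_comp hf.comp_neg
  rw [autocorrelation, Real.fourier_mul_convolution_eq hf_refl hf, Real.fourier_conj_comp_neg,
    conj_mul']
  push_cast
  rfl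

lemma HasCompactSupport.continuous_autocorrelation (hs : HasCompactSupport f)
    (hc : Continuous f) : Continuous (autocorrelation f) :=
  hs.continuous_convolution_right _
    ((by fun_prop : Continuous fun t => conj (f (-t))).locallyIntegrable (μ := volume)) hc

lemma HasCompactSupport.autocorrelation (hs : HasCompactSupport f) :
    HasCompactSupport (autocorrelation f) := by
  refine HasCompactSupport.convolution _ ?_ hs
  exact (hs.comp_homeomorph (Homeomorph.neg ℝ)).comp_left (map_zero (starRingEnd ℂ))

theorem Real.tsum_sq_norm_fourier_add_le (hc : Continuous f) (hs : HasCompactSupport f)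
    (ξ₀ : ℝ) :
    ∑' n : ℤ, ‖𝓕 f (n + ξ₀)‖ ^ 2 ≤ ∑' n : ℤ, ‖autocorrelation f n‖ := by
  let g : ℝ → ℂ := fun t => cexp ((-2 * π * ξ₀ * t : ℝ) * I) * autocorrelation f t
  have hg : Continuous g := by
    have := hs.continuous_autocorrelation hc
    fun_prop
  have hg_supp : HasCompactSupport g := hs.autocorrelation.mul_left
  have hg_fourier (ξ : ℝ) : 𝓕 g ξ = (‖𝓕 f (ξ + ξ₀)‖ ^ 2 : ℝ) := by
    rw [Real.fourier_exp_mul, Real.fourier_autocorrelation (hc.integrable_of_hasCompactSupport hs)]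
  have h_sum : Summable fun n : ℤ => ‖𝓕 f (n + ξ₀)‖ ^ 2 := by
    simpa only [Real.fourier_exp_mul] using Real.summable_sq_norm_fourier_intCast
      (f := fun t => cexp ((-2 * π * ξ₀ * t : ℝ) * I) * f t) (by fun_prop) hs.mul_left
  calc ∑' n : ℤ, ‖𝓕 f (n + ξ₀)‖ ^ 2
      = ‖((∑' n : ℤ, ‖𝓕 f (n + ξ₀)‖ ^ 2 : ℝ) : ℂ)‖ := by
        rw [norm_real, Real.norm_of_nonneg (tsum_nonneg fun _ => by positivity)]
    _ = ‖∑' n : ℤ, g n‖ := by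
        rw [Real.tsum_eq_tsum_fourier_of_hasCompactSupport hg hg_supp, ofReal_tsum]
        · simp_rw [hg_fourier]
        · simpa only [hg_fourier] using summable_ofReal.2 h_sum
    _ ≤ ∑' n : ℤ, ‖g n‖ := norm_tsum_le_tsum_norm hg_supp.summable_norm_comp_intCast
    _ = ∑' n : ℤ, ‖autocorrelation f n‖ := by
        simp only [g, norm_mul, norm_exp_ofReal_mul_I, one_mul]

end Autocorrelation

theorem upper_riesz_bound
    (β : ℝ → ℝ) (hcont : Continuous β) (hsupp : HasCompactSupport β)
    (βhat : ℝ → ℂ)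
    (hβhat : ∀ ω : ℝ, βhat ω = ∫ t : ℝ, (β t : ℂ) * Complex.exp (-Complex.I * ω * t)) :
    ∀ ω : ℝ, ∑' k : ℤ, ‖βhat (ω - 2 * k * π)‖ ^ 2 ≤
      ∑' n : ℤ, |∫ u : ℝ, β ((n : ℝ) - u) * β (-u)| := by
  intro ω
  let b : ℝ → ℂ := fun t => β t
  have hβhat_eq (k : ℤ) : βhat (ω - 2 * k * π) = 𝓕 b ((-k : ℤ) + ω / (2 * π)) := by
    rw [hβhat, Real.fourier_real_eq_integral_exp_smul]
    congr 1 with t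
    rw [smul_eq_mul, mul_comm]
    congr 2
    push_cast
    field_simp
    ring
  have hb_autocorrelation (t : ℝ) :
      autocorrelation b t = ((∫ u : ℝ, β (t - u) * β (-u) : ℝ) : ℂ) := by
    simp only [autocorrelation, convolution_def]
    rw [← integral_complex_ofReal]
    simp [b, mul_comm]
  calc ∑' k : ℤ, ‖βhat (ω - 2 * k * π)‖ ^ 2
      = ∑' n : ℤ, ‖𝓕 b (n + ω / (2 * π))‖ ^ 2 := by
        simp_rw [hβhat_eq]
        exact (Equiv.neg ℤ).tsum_eq fun n => ‖𝓕 b (n + ω / (2 * π))‖ ^ 2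
    _ ≤ ∑' n : ℤ, ‖autocorrelation b n‖ :=
        Real.tsum_sq_norm_fourier_add_le (by fun_prop) (hsupp.comp_left ofReal_zero) _
    _ = ∑' n : ℤ, |∫ u : ℝ, β ((n : ℝ) - u) * β (-u)| := by
        simp only [hb_autocorrelation, norm_real, Real.norm_eq_abs]
end

section
/- For a Riesz basis defined by shifts on the half-integer grid: with G₀(ω) = Σ_n λ[n] e^{−iωn/2} and G₁(ω) = Σ_n (−1)^n λ[n] e^{−iωn/2}, and φ(t) = Σ_n λ[n] β(t−n/2), one has the identity Σ_{k∈ℤ} |φ̂(ω−2kπ)|² = |G₀(ω)|² Σ_{k even} |β̂(ω−2kπ)|² + |G₁(ω)|² Σ_{k odd} |β̂(ω−2kπ)|² for all ω ∈ ℝ. -/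
open scoped BigOperators Real
open Complex

lemma hasSum_int_even_add_odd {f : ℤ → ℝ} {a b : ℝ}
    (he : HasSum (fun k ↦ f (2 * k)) a) (ho : HasSum (fun k ↦ f (2 * k + 1)) b) :
    HasSum f (a + b) := by
  have h2 : Function.Injective (fun k : ℤ ↦ 2 * k) := mul_right_injective₀ two_ne_zero
  have h2' : Function.Injective (fun k : ℤ ↦ 2 * k + 1) :=
    (add_left_injective 1).comp h2
  refine (h2.hasSum_range_iff.2 he).add_isCompl ?_ (h2'.hasSum_range_iff.2 ho)
  simpa [Function.comp_def] using Int.isCompl_even_odd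

lemma exp_shift (x : ℝ) (k n : ℤ) :
    Complex.exp (-Complex.I * (↑(x - 2 * k * π)) * n / 2) =
      ((-1 : ℂ) ^ k) ^ n * Complex.exp (-Complex.I * x * n / 2) := by
  have h : (-Complex.I * (↑(x - 2 * k * π)) * n / 2) =
      ((k * n : ℤ) : ℂ) * (π * Complex.I) + (-Complex.I * x * n / 2) := by
    push_cast; ring
  rw [h, Complex.exp_add, Complex.exp_int_mul, Complex.exp_pi_mul_I, zpow_mul]

theorem riesz_even_odd_identity
    (βhat : ℝ → ℂ)
    (hβsum : ∀ ω : ℝ, Summable (fun k : ℤ => ‖βhat (ω - 2 * k * π)‖ ^ 2))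
    (lam : ℤ → ℂ) (hlam : Summable (fun n : ℤ => ‖lam n‖))
    (G₀ G₁ φhat : ℝ → ℂ)
    (hG₀ : ∀ ω : ℝ, G₀ ω = ∑' n : ℤ, lam n * Complex.exp (-Complex.I * ω * n / 2))
    (hG₁ : ∀ ω : ℝ, G₁ ω = ∑' n : ℤ, (-1 : ℂ) ^ n * lam n * Complex.exp (-Complex.I * ω * n / 2))
    (hφhat : ∀ ω : ℝ, φhat ω = G₀ ω * βhat ω) :
    ∀ ω : ℝ, ∑' k : ℤ, ‖φhat (ω - 2 * k * π)‖ ^ 2 =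
      ‖G₀ ω‖ ^ 2 * (∑' k : ℤ, ‖βhat (ω - 2 * (2 * k) * π)‖ ^ 2) +
      ‖G₁ ω‖ ^ 2 * (∑' k : ℤ, ‖βhat (ω - 2 * (2 * k + 1) * π)‖ ^ 2) := by
  intro ω
  have key : ∀ k : ℤ, φhat (ω - 2 * k * π) =
      (if Even k then G₀ ω else G₁ ω) * βhat (ω - 2 * k * π) := by
    intro k
    rw [hφhat]
    congr 1
    rw [hG₀]
    by_cases hk : Even k
    · rw [if_pos hk, hG₀]
      refine tsum_congr fun n ↦ ?_
      rw [exp_shift, hk.neg_one_zpow, one_zpow, one_mul]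
    · rw [if_neg hk, hG₁]
      refine tsum_congr fun n ↦ ?_
      rw [exp_shift, (Int.not_even_iff_odd.1 hk).neg_one_zpow]
      ring
  have keyn : ∀ k : ℤ, ‖φhat (ω - 2 * k * π)‖ ^ 2 =
      (if Even k then ‖G₀ ω‖ ^ 2 else ‖G₁ ω‖ ^ 2) * ‖βhat (ω - 2 * k * π)‖ ^ 2 := by
    intro k
    rw [key, norm_mul, mul_pow]
    by_cases hk : Even k <;> simp [hk]
  have h2 : Function.Injective (fun k : ℤ ↦ 2 * k) := mul_right_injective₀ two_ne_zero
  have h2' : Function.Injective (fun k : ℤ ↦ 2 * k + 1) := (add_left_injective 1).comp h2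
  have hse : Summable (fun k : ℤ ↦ ‖βhat (ω - 2 * (2 * k) * π)‖ ^ 2) := by
    have := (hβsum ω).comp_injective h2
    simpa [Function.comp_def] using this
  have hso : Summable (fun k : ℤ ↦ ‖βhat (ω - 2 * (2 * k + 1) * π)‖ ^ 2) := by
    have := (hβsum ω).comp_injective h2'
    simpa [Function.comp_def] using this
  have He : HasSum (fun k : ℤ ↦ ‖φhat (ω - 2 * (2 * k : ℤ) * π)‖ ^ 2)
      (‖G₀ ω‖ ^ 2 * ∑' k : ℤ, ‖βhat (ω - 2 * (2 * k) * π)‖ ^ 2) := by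
    have h := hse.hasSum.mul_left (‖G₀ ω‖ ^ 2)
    have heq : (fun k : ℤ ↦ ‖φhat (ω - 2 * (2 * k : ℤ) * π)‖ ^ 2) =
        fun k : ℤ ↦ ‖G₀ ω‖ ^ 2 * ‖βhat (ω - 2 * (2 * k) * π)‖ ^ 2 := by
      funext k
      rw [keyn, if_pos (even_two_mul k)]
      push_cast
      ring_nf
    rw [heq]
    exact h
  have Ho : HasSum (fun k : ℤ ↦ ‖φhat (ω - 2 * (2 * k + 1 : ℤ) * π)‖ ^ 2)
      (‖G₁ ω‖ ^ 2 * ∑' k : ℤ, ‖βhat (ω - 2 * (2 * k + 1) * π)‖ ^ 2) := by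
    have h := hso.hasSum.mul_left (‖G₁ ω‖ ^ 2)
    have heq : (fun k : ℤ ↦ ‖φhat (ω - 2 * (2 * k + 1 : ℤ) * π)‖ ^ 2) =
        fun k : ℤ ↦ ‖G₁ ω‖ ^ 2 * ‖βhat (ω - 2 * (2 * k + 1) * π)‖ ^ 2 := by
      funext k
      rw [keyn, if_neg (by simp [Int.even_add_one, parity_simps])]
      push_cast
      ring_nf
    rw [heq]
    exact h
  exact (hasSum_int_even_add_odd (f := fun k : ℤ ↦ ‖φhat (ω - 2 * k * π)‖ ^ 2) He Ho).tsum_eq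
end

section
/- The causal exponential B-spline of order n₀ ≥ 2 with roots α = (α₁,…,α_{n₀}), defined as β_{α₁} ⋆ ⋯ ⋆ β_{α_{n₀}} with β_{α_j}(t) = e^{α_j t}𝟙_{[0,1)}(t), is of class C^{n₀−2} on ℝ. -/
open scoped BigOperators

/-- Convolution of complex-valued functions on ℝ. -/
noncomputable def conv (f g : ℝ → ℂ) (t : ℝ) : ℂ := ∫ u : ℝ, f (t - u) * g u

/-- First-order causal exponential B-spline with (complex) root a. -/
noncomputable def expB (a : ℂ) (t : ℝ) : ℂ :=
  if 0 ≤ t ∧ t < 1 then Complex.exp (a * t) else 0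

/-- `multiB a n` is the causal exponential B-spline of order `n + 1` with roots
`a 0, …, a n`, defined by iterated convolution of first-order splines. -/
noncomputable def multiB (a : ℕ → ℂ) : ℕ → ℝ → ℂ
  | 0 => expB (a 0)
  | n + 1 => conv (expB (a (n + 1))) (multiB a n)

lemma expB_eq_indicator (a : ℂ) :
    expB a = Set.indicator (Set.Ico (0:ℝ) 1) (fun t => Complex.exp (a * t)) := by
  funext t
  simp [expB, Set.indicator, Set.mem_Ico]

lemma expB_integrable (a : ℂ) : MeasureTheory.Integrable (expB a) := by
  rw [expB_eq_indicator]
  apply MeasureTheory.IntegrableOn.integrable_indicator _ measurableSet_Ico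
  apply MeasureTheory.IntegrableOn.mono_set _ Set.Ico_subset_Icc_self
  exact (Complex.continuous_exp.comp (by continuity)).continuousOn.integrableOn_Icc

/-- Explicit formula for convolution with a first-order exponential B-spline. -/
lemma conv_expB (a : ℂ) (f : ℝ → ℂ) (t : ℝ) :
    conv (expB a) f t =
      Complex.exp (a * t) * ∫ u in (t - 1)..t, f u * Complex.exp (-(a * u)) := by
  have key : (fun u : ℝ => expB a (t - u) * f u) =
      Set.indicator (Set.Ioc (t - 1) t)
        (fun u => Complex.exp (a * t) * (f u * Complex.exp (-(a * u)))) := by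
    funext u
    by_cases h : t - 1 < u ∧ u ≤ t
    · have hmem : u ∈ Set.Ioc (t - 1) t := h
      have hcond : 0 ≤ t - u ∧ t - u < 1 := ⟨by linarith [h.2], by linarith [h.1]⟩
      rw [Set.indicator_of_mem hmem]
      simp only [expB, if_pos hcond]
      push_cast
      rw [mul_sub, sub_eq_add_neg, Complex.exp_add]
      ring
    · have hmem : u ∉ Set.Ioc (t - 1) t := fun hu => h ⟨hu.1, hu.2⟩
      rw [Set.indicator_of_notMem hmem]
      have hcond : ¬(0 ≤ t - u ∧ t - u < 1) := by
        intro hc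
        exact h ⟨by linarith [hc.2], by linarith [hc.1]⟩
      simp only [expB, if_neg hcond, zero_mul]
  rw [conv, key, MeasureTheory.integral_indicator measurableSet_Ioc,
    ← intervalIntegral.integral_of_le (by linarith : t - 1 ≤ t),
    intervalIntegral.integral_const_mul]

/-- A primitive of a `C^m` function is `C^(m+1)`. -/
lemma contDiff_primitive {h : ℝ → ℂ} {m : ℕ} (hh : ContDiff ℝ (m : ℕ∞) h) :
    ContDiff ℝ ((m + 1 : ℕ) : ℕ∞) (fun t => ∫ x in (0:ℝ)..t, h x) := by
  have hc : Continuous h := hh.continuous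
  have hderiv : deriv (fun t => ∫ x in (0:ℝ)..t, h x) = h := by
    funext t
    exact hc.deriv_integral h 0 t ▸ rfl
  have hcast : (((m + 1 : ℕ) : ℕ∞) : WithTop ℕ∞) = ((m : ℕ∞) : WithTop ℕ∞) + 1 := by
    push_cast; rfl
  rw [hcast, contDiff_succ_iff_deriv]
  refine ⟨fun t => ?_, by simp, by rw [hderiv]; exact hh⟩
  exact (hc.integral_hasStrictDerivAt 0 t).hasDerivAt.differentiableAt

lemma multiB_contDiff (a : ℕ → ℂ) : ∀ m : ℕ, ContDiff ℝ (m : ℕ∞) (multiB a (m + 1)) := by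
  have hexp : ∀ b : ℂ, ContDiff ℝ (⊤ : ℕ∞) fun t : ℝ => Complex.exp (b * t) := by
    intro b
    exact Complex.contDiff_exp.comp ((contDiff_const.mul Complex.ofRealCLM.contDiff).of_le (by exact_mod_cast le_top))
  intro m
  induction m with
  | zero =>
    have h0 : (((0 : ℕ) : ℕ∞) : WithTop ℕ∞) = 0 := by norm_cast
    rw [h0, contDiff_zero]
    have : multiB a 1 = fun t : ℝ => Complex.exp (a 1 * t) *
        ∫ u in (t - 1)..t, multiB a 0 u * Complex.exp (-(a 1 * u)) := by
      funext t; exact conv_expB (a 1) (multiB a 0) t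
    rw [this]
    apply Continuous.mul ((hexp (a 1)).continuous)
    have hint : ∀ b c : ℝ,
        IntervalIntegrable (fun u => multiB a 0 u * Complex.exp (-(a 1 * u))) MeasureTheory.volume b c := by
      intro b c
      apply IntervalIntegrable.mul_continuousOn
        ((expB_integrable (a 0)).intervalIntegrable)
      exact (Complex.continuous_exp.comp (by continuity)).continuousOn
    have hprim := intervalIntegral.continuous_primitive hint 0
    have hrepr : (fun t : ℝ => ∫ u in (t - 1)..t, multiB a 0 u * Complex.exp (-(a 1 * u))) =
        fun t => (∫ u in (0:ℝ)..t, multiB a 0 u * Complex.exp (-(a 1 * u))) -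
          ∫ u in (0:ℝ)..(t - 1), multiB a 0 u * Complex.exp (-(a 1 * u)) := by
      funext t
      rw [intervalIntegral.integral_interval_sub_left (hint 0 t) (hint 0 (t - 1))]
    rw [hrepr]
    exact hprim.sub (hprim.comp (by continuity))
  | succ m ih =>
    have : multiB a (m + 2) = fun t : ℝ => Complex.exp (a (m + 2) * t) *
        ∫ u in (t - 1)..t, multiB a (m + 1) u * Complex.exp (-(a (m + 2) * u)) := by
      funext t; exact conv_expB (a (m + 2)) (multiB a (m + 1)) t
    rw [this]
    have hh : ContDiff ℝ (m : ℕ∞) fun u : ℝ => multiB a (m + 1) u * Complex.exp (-(a (m + 2) * u)) := by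
      apply ih.mul
      have := ContDiff.of_le (hexp (-(a (m + 2)))) (show ((m : ℕ∞) : WithTop ℕ∞) ≤ ((⊤ : ℕ∞) : WithTop ℕ∞) by exact_mod_cast le_top)
      simpa [neg_mul] using this
    have hprim := contDiff_primitive hh
    have hint : ∀ b c : ℝ,
        IntervalIntegrable (fun u => multiB a (m + 1) u * Complex.exp (-(a (m + 2) * u))) MeasureTheory.volume b c :=
      fun b c => hh.continuous.intervalIntegrable b c
    have hrepr : (fun t : ℝ => ∫ u in (t - 1)..t, multiB a (m + 1) u * Complex.exp (-(a (m + 2) * u))) =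
        fun t => (∫ u in (0:ℝ)..t, multiB a (m + 1) u * Complex.exp (-(a (m + 2) * u))) -
          ∫ u in (0:ℝ)..(t - 1), multiB a (m + 1) u * Complex.exp (-(a (m + 2) * u)) := by
      funext t
      rw [intervalIntegral.integral_interval_sub_left (hint 0 t) (hint 0 (t - 1))]
    apply ContDiff.mul (ContDiff.of_le (hexp (a (m + 2))) (show (((m + 1 : ℕ) : ℕ∞) : WithTop ℕ∞) ≤ ((⊤ : ℕ∞) : WithTop ℕ∞) by exact_mod_cast le_top))
    rw [hrepr]
    have hsub : ContDiff ℝ ((m + 1 : ℕ) : ℕ∞) (fun t : ℝ => t - 1) := contDiff_id.sub contDiff_const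
    exact hprim.sub (hprim.comp hsub)

theorem multiB_smooth (n₀ : ℕ) (hn : 2 ≤ n₀) (a : ℕ → ℂ) :
    ContDiff ℝ ((n₀ - 2 : ℕ) : ℕ∞) (multiB a (n₀ - 1)) := by
  obtain ⟨m, rfl⟩ : ∃ m, n₀ = m + 2 := ⟨n₀ - 2, by omega⟩
  have h1 : m + 2 - 2 = m := by omega
  have h2 : m + 2 - 1 = m + 1 := by omega
  rw [h1, h2]
  exact multiB_contDiff a m
end
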